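/- arXiv:2409.10442 — 4 statements merged into one kernel-verified Lean document; each statement's English description precedes it below -/
import Mathlib

section
/- Under the constraints of the recursion lemma with α₀ ∈ [0,1], for every i and every natural k ≥ 0, the inequality 2Q_i/(k+k₀)^{α_i-α₀} - Q_i β₀/(k+k₀)^{α_i} ≤ 2Q_i/(k+k₀+1)^{α_i-α₀} holds, provided (2/β₀) max{1, α_i - α₀} ≤ (k+k₀)^{1-α₀}. -/
/-!
Write `t = k + k₀ ≥ 1` and `γ = αᵢ - α₀`. For `γ ≤ 0` the claim is monotonicity of `x ↦ x ^ γ`.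
For `γ > 0`, the tangent line of the convex function `x ↦ x ^ (-γ)` (Bernoulli's inequality with
a negative exponent) gives `t ^ (-γ) - (t + 1) ^ (-γ) ≤ γ t ^ (-γ - 1)`, and the hypothesis
`2γ ≤ β₀ t ^ (1 - α₀)` turns `2Qγ t ^ (-γ - 1)` into at most `Qβ₀ t ^ (-αᵢ)`.
-/

open Real

theorem one_add_mul_self_le_rpow_one_add_of_nonpos {s : ℝ} (hs : -1 < s) {p : ℝ} (hp : p ≤ 0) :
    1 + p * s ≤ (1 + s) ^ p := by
  have hs1 : 0 < 1 + s := by linarith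
  have hlog : log (1 + s) ≤ s := by linarith [log_le_sub_one_of_pos hs1]
  calc 1 + p * s ≤ log (1 + s) * p + 1 := by nlinarith
    _ ≤ exp (log (1 + s) * p) := add_one_le_exp _
    _ = (1 + s) ^ p := (rpow_def_of_pos hs1 p).symm

theorem rpow_add_mul_mul_rpow_sub_one_le_rpow_add {t h p : ℝ} (ht : 0 < t) (hth : 0 < t + h)
    (hp : p ≤ 0) : t ^ p + p * h * t ^ (p - 1) ≤ (t + h) ^ p := by
  have hs : -1 < h / t := by
    rw [lt_div_iff₀ ht]; linarith
  have hsplit : t + h = t * (1 + h / t) := by field_simp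
  calc t ^ p + p * h * t ^ (p - 1) = t ^ p * (1 + p * (h / t)) := by
        rw [rpow_sub_one ht.ne']; field_simp
    _ ≤ t ^ p * (1 + h / t) ^ p :=
        mul_le_mul_of_nonneg_left (one_add_mul_self_le_rpow_one_add_of_nonpos hs hp) (by positivity)
    _ = (t + h) ^ p := by rw [hsplit, mul_rpow ht.le (by linarith)]

theorem recursion_induction_step_general (Q β₀ k₀ α₀ αi : ℝ) (k : ℕ)
    (hQ : 0 < Q) (hβ₀ : 0 < β₀) (hk₀ : 1 ≤ k₀)
    (hkey : (2 / β₀) * max 1 (αi - α₀) ≤ ((k : ℝ) + k₀) ^ (1 - α₀)) :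
    2 * Q / ((k : ℝ) + k₀) ^ (αi - α₀) - Q * β₀ / ((k : ℝ) + k₀) ^ αi ≤
      2 * Q / ((k : ℝ) + k₀ + 1) ^ (αi - α₀) := by
  set t : ℝ := (k : ℝ) + k₀
  set γ : ℝ := αi - α₀ with hγ
  have ht : 0 < t := by positivity
  have hdamp : 0 ≤ Q * β₀ / t ^ αi := by positivity
  rcases le_or_gt γ 0 with hγ0 | hγ0
  · have : 2 * Q / t ^ γ ≤ 2 * Q / (t + 1) ^ γ :=
      div_le_div_of_nonneg_left (by positivity) (by positivity)
        (rpow_le_rpow_of_nonpos ht (by linarith) hγ0)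
    linarith
  have hγβ : 2 * γ ≤ β₀ * t ^ (1 - α₀) := by
    have := (mul_le_mul_of_nonneg_left (le_max_right 1 γ) (by positivity : 0 ≤ 2 / β₀)).trans hkey
    rw [div_mul_eq_mul_div, div_le_iff₀ hβ₀] at this
    linarith
  have htangent := rpow_add_mul_mul_rpow_sub_one_le_rpow_add ht (by linarith : 0 < t + 1)
    (neg_nonpos.2 hγ0.le)
  have hgap : t ^ (-γ - 1) * (2 * γ) ≤ β₀ * t ^ (-αi) := by
    calc t ^ (-γ - 1) * (2 * γ) ≤ t ^ (-γ - 1) * (β₀ * t ^ (1 - α₀)) :=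
          mul_le_mul_of_nonneg_left hγβ (by positivity)
      _ = β₀ * t ^ (-αi) := by
          rw [mul_left_comm, ← rpow_add ht, hγ]; ring_nf
  simp only [div_eq_mul_inv, ← rpow_neg ht.le, ← rpow_neg (by linarith : (0:ℝ) ≤ t + 1)]
  nlinarith

theorem recursion_induction_step (Q β₀ k₀ α₀ αi : ℝ) (k : ℕ)
    (hQ : 0 < Q) (hβ₀ : 0 < β₀) (hk₀ : 1 ≤ k₀)
    (hα₀0 : 0 ≤ α₀) (hα₀1 : α₀ ≤ 1)
    (hkey : (2 / β₀) * max 1 (αi - α₀) ≤ ((k : ℝ) + k₀) ^ (1 - α₀)) :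
    2 * Q / ((k : ℝ) + k₀) ^ (αi - α₀) - Q * β₀ / ((k : ℝ) + k₀) ^ αi ≤
      2 * Q / ((k : ℝ) + k₀ + 1) ^ (αi - α₀) :=
  recursion_induction_step_general Q β₀ k₀ α₀ αi k hQ hβ₀ hk₀ hkey
end

section
/- Let f : ℝ^d → ℝ be differentiable with L-Lipschitz gradient on a convex set Q, and let f_δ(x) = f(x) + δ(x) where |δ(x)| ≤ Δ for all x ∈ Q. For τ > 0 define the full coordinate finite-difference estimator g(x) = Σ_{i=1}^d ((f_δ(x+τe_i) - f_δ(x-τe_i))/(2τ)) e_i. Then for any x with x ± τe_i ∈ Q for all i, ‖g(x) - ∇f(x)‖² ≤ d L² τ² + 2dΔ²/τ². -/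
/-!
Along each segment in `Q`, the Lipschitz bound on `∇f` makes the first-order Taylor error of `f`
at most `L/2 · ‖h‖²`. Applied at `x ± τ eᵢ`, this bounds the error of the exact central difference
in coordinate `i` by `Lτ/2`, and the noise `δ` adds at most `Δ/τ`. Squaring with
`(a + b)² ≤ 2a² + 2b²` and summing over the `d` coordinates gives the claim.
-/

open scoped RealInnerProductSpace

open Set in
theorem abs_sub_sub_inner_gradient_le_of_lipschitzOn_gradient
    {E : Type*} [NormedAddCommGroup E] [InnerProductSpace ℝ E] [CompleteSpace E]
    {f : E → ℝ} {Q : Set E} {L : ℝ} {x y : E}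
    (hf : ∀ z ∈ Q, DifferentiableAt ℝ f z)
    (hLip : ∀ a ∈ Q, ∀ b ∈ Q, ‖gradient f a - gradient f b‖ ≤ L * ‖a - b‖)
    (hxy : segment ℝ x y ⊆ Q) :
    |f y - f x - ⟪gradient f x, y - x⟫| ≤ L / 2 * ‖y - x‖ ^ 2 := by
  set v := y - x
  have hx : x ∈ Q := hxy (left_mem_segment ℝ x y)
  have hmem : ∀ t ∈ Icc (0 : ℝ) 1, x + t • v ∈ Q := fun t ht =>
    hxy (segment_eq_image' ℝ x y ▸ mem_image_of_mem _ ht)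
  set φ : ℝ → ℝ := fun t => f (x + t • v) - f x - t * ⟪gradient f x, v⟫
  have hφ : ∀ t ∈ Icc (0 : ℝ) 1,
      HasDerivAt φ (⟪gradient f (x + t • v), v⟫ - ⟪gradient f x, v⟫) t := by
    intro t ht
    have hline : HasDerivAt (fun t : ℝ => x + t • v) v t := by
      simpa using ((hasDerivAt_id t).smul_const v).const_add x
    have hcomp := (hf _ (hmem t ht)).hasGradientAt.hasFDerivAt.comp_hasDerivAt t hline
    have h := (hcomp.sub_const (f x)).sub ((hasDerivAt_id t).mul_const ⟪gradient f x, v⟫)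
    rwa [InnerProductSpace.toDual_apply_apply, one_mul] at h
  have hB : ∀ t, HasDerivAt (fun t : ℝ => L / 2 * ‖v‖ ^ 2 * t ^ 2) (L * ‖v‖ ^ 2 * t) t :=
    fun t => ((hasDerivAt_pow 2 t).const_mul (L / 2 * ‖v‖ ^ 2)).congr_deriv (by norm_num; ring)
  have hbound : ∀ t ∈ Ico (0 : ℝ) 1,
      ‖⟪gradient f (x + t • v), v⟫ - ⟪gradient f x, v⟫‖ ≤ L * ‖v‖ ^ 2 * t := by
    intro t ht
    rw [← inner_sub_left, Real.norm_eq_abs]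
    calc |⟪gradient f (x + t • v) - gradient f x, v⟫|
        ≤ ‖gradient f (x + t • v) - gradient f x‖ * ‖v‖ := abs_real_inner_le_norm _ _
      _ ≤ L * ‖x + t • v - x‖ * ‖v‖ := by
          gcongr
          exact hLip _ (hmem t (Ico_subset_Icc_self ht)) _ hx
      _ = L * ‖v‖ ^ 2 * t := by
          rw [add_sub_cancel_left, norm_smul, Real.norm_eq_abs, abs_of_nonneg ht.1]
          ring
  -- `|φ' t| ≤ L ‖v‖² t` and `φ 0 = 0`, so `|φ|` stays below the parabola `L/2 ‖v‖² t²`.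
  have hfence := image_norm_le_of_norm_deriv_right_le_deriv_boundary
    (fun t ht => (hφ t ht).continuousAt.continuousWithinAt)
    (fun t ht => (hφ t (Ico_subset_Icc_self ht)).hasDerivWithinAt) (by simp [φ]) hB hbound
    (right_mem_Icc.2 zero_le_one)
  simpa [φ, v] using hfence

theorem abs_sub_sub_two_inner_gradient_le_of_lipschitzOn_gradient
    {E : Type*} [NormedAddCommGroup E] [InnerProductSpace ℝ E] [CompleteSpace E]
    {f : E → ℝ} {Q : Set E} {L : ℝ} {x h : E} (hQ : Convex ℝ Q)
    (hf : ∀ z ∈ Q, DifferentiableAt ℝ f z)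
    (hLip : ∀ a ∈ Q, ∀ b ∈ Q, ‖gradient f a - gradient f b‖ ≤ L * ‖a - b‖)
    (hx : x ∈ Q) (hxh : x + h ∈ Q) (hxh' : x - h ∈ Q) :
    |f (x + h) - f (x - h) - 2 * ⟪gradient f x, h⟫| ≤ L * ‖h‖ ^ 2 := by
  have hfwd := abs_sub_sub_inner_gradient_le_of_lipschitzOn_gradient hf hLip
    (hQ.segment_subset hx hxh)
  have hbwd := abs_sub_sub_inner_gradient_le_of_lipschitzOn_gradient hf hLip
    (hQ.segment_subset hx hxh')
  rw [add_sub_cancel_left] at hfwd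
  rw [sub_sub_cancel_left, inner_neg_right, norm_neg] at hbwd
  calc |f (x + h) - f (x - h) - 2 * ⟪gradient f x, h⟫|
      = |(f (x + h) - f x - ⟪gradient f x, h⟫) - (f (x - h) - f x - -⟪gradient f x, h⟫)| := by
        ring_nf
    _ ≤ L / 2 * ‖h‖ ^ 2 + L / 2 * ‖h‖ ^ 2 := (abs_sub _ _).trans (add_le_add hfwd hbwd)
    _ = L * ‖h‖ ^ 2 := by ring

theorem abs_noisy_central_difference_sub_inner_gradient_le
    {E : Type*} [NormedAddCommGroup E] [InnerProductSpace ℝ E] [CompleteSpace E]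
    {f δ : E → ℝ} {Q : Set E} {L Δ τ : ℝ} {x v : E} (hQ : Convex ℝ Q)
    (hf : ∀ z ∈ Q, DifferentiableAt ℝ f z)
    (hLip : ∀ a ∈ Q, ∀ b ∈ Q, ‖gradient f a - gradient f b‖ ≤ L * ‖a - b‖)
    (hδ : ∀ z ∈ Q, |δ z| ≤ Δ) (hτ : 0 < τ)
    (hx : x ∈ Q) (hxv : x + τ • v ∈ Q) (hxv' : x - τ • v ∈ Q) :
    |((f (x + τ • v) + δ (x + τ • v)) - (f (x - τ • v) + δ (x - τ • v))) / (2 * τ)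
        - ⟪gradient f x, v⟫| ≤ L * τ * ‖v‖ ^ 2 / 2 + Δ / τ := by
  have hexact := abs_sub_sub_two_inner_gradient_le_of_lipschitzOn_gradient hQ hf hLip hx hxv hxv'
  rw [inner_smul_right, norm_smul, Real.norm_of_nonneg hτ.le] at hexact
  have hnoise : |δ (x + τ • v) - δ (x - τ • v)| ≤ 2 * Δ :=
    (abs_sub _ _).trans (by linarith [hδ _ hxv, hδ _ hxv'])
  have h2τ : (0 : ℝ) < 2 * τ := by positivity
  calc |((f (x + τ • v) + δ (x + τ • v)) - (f (x - τ • v) + δ (x - τ • v))) / (2 * τ)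
        - ⟪gradient f x, v⟫|
      = |((f (x + τ • v) - f (x - τ • v) - 2 * (τ * ⟪gradient f x, v⟫))
          + (δ (x + τ • v) - δ (x - τ • v))) / (2 * τ)| := by
        congr 1
        field_simp
        ring
    _ ≤ (L * (τ * ‖v‖) ^ 2 + 2 * Δ) / (2 * τ) := by
        rw [abs_div, abs_of_pos h2τ]
        gcongr
        exact (abs_add_le _ _).trans (add_le_add hexact hnoise)
    _ = L * τ * ‖v‖ ^ 2 / 2 + Δ / τ := by
        field_simp

theorem EuclideanSpace.sum_smul_single_one {𝕜 ι : Type*} [RCLike 𝕜] [Fintype ι] [DecidableEq ι]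
    (c : ι → 𝕜) : ∑ i, c i • EuclideanSpace.single i (1 : 𝕜) = WithLp.toLp 2 c := by
  ext j
  simp [Pi.single_apply]

theorem EuclideanSpace.norm_sq_le_card_mul_sq {𝕜 ι : Type*} [RCLike 𝕜] [Fintype ι]
    {u : EuclideanSpace 𝕜 ι} {a : ℝ} (h : ∀ i, ‖u i‖ ≤ a) : ‖u‖ ^ 2 ≤ Fintype.card ι * a ^ 2 := by
  rw [EuclideanSpace.norm_sq_eq]
  calc ∑ i, ‖u i‖ ^ 2 ≤ ∑ _i : ι, a ^ 2 :=
        Finset.sum_le_sum fun i _ => pow_le_pow_left₀ (norm_nonneg _) (h i) 2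
    _ = Fintype.card ι * a ^ 2 := by simp

theorem full_approx_error_general (d : ℕ)
    (f δ : EuclideanSpace ℝ (Fin d) → ℝ)
    (Q : Set (EuclideanSpace ℝ (Fin d))) (hQconv : Convex ℝ Q)
    (L Δ τ : ℝ) (hτ : 0 < τ)
    (hdiff : Differentiable ℝ f)
    (hLip : ∀ x ∈ Q, ∀ y ∈ Q, ‖gradient f x - gradient f y‖ ≤ L * ‖x - y‖)
    (hδ : ∀ x ∈ Q, |δ x| ≤ Δ)
    (x : EuclideanSpace ℝ (Fin d)) (hx : x ∈ Q)
    (hxi : ∀ i : Fin d, x + τ • EuclideanSpace.single i (1 : ℝ) ∈ Q ∧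
      x - τ • EuclideanSpace.single i (1 : ℝ) ∈ Q) :
    ‖(∑ i : Fin d,
        (((f (x + τ • EuclideanSpace.single i (1 : ℝ)) + δ (x + τ • EuclideanSpace.single i (1 : ℝ)))
          - (f (x - τ • EuclideanSpace.single i (1 : ℝ)) + δ (x - τ • EuclideanSpace.single i (1 : ℝ))))
          / (2 * τ)) • EuclideanSpace.single i (1 : ℝ)) - gradient f x‖ ^ 2 ≤
      (d : ℝ) * L ^ 2 * τ ^ 2 + 2 * (d : ℝ) * Δ ^ 2 / τ ^ 2 := by
  rw [EuclideanSpace.sum_smul_single_one]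
  set c : Fin d → ℝ := fun i =>
    ((f (x + τ • EuclideanSpace.single i (1 : ℝ)) + δ (x + τ • EuclideanSpace.single i (1 : ℝ)))
      - (f (x - τ • EuclideanSpace.single i (1 : ℝ)) + δ (x - τ • EuclideanSpace.single i (1 : ℝ))))
      / (2 * τ)
  have hcoord : ∀ i, ‖(WithLp.toLp 2 c - gradient f x) i‖ ≤ L * τ / 2 + Δ / τ := by
    intro i
    have h := abs_noisy_central_difference_sub_inner_gradient_le hQconv (fun z _ => hdiff z)
      hLip hδ hτ hx (hxi i).1 (hxi i).2
    rw [EuclideanSpace.inner_single_right, PiLp.norm_single] at h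
    simpa [c] using h
  calc _ ≤ (d : ℝ) * (L * τ / 2 + Δ / τ) ^ 2 := by
        simpa using EuclideanSpace.norm_sq_le_card_mul_sq hcoord
    _ ≤ (d : ℝ) * (2 * ((L * τ / 2) ^ 2 + (Δ / τ) ^ 2)) := by gcongr; exact add_sq_le
    _ = (d : ℝ) * L ^ 2 * τ ^ 2 / 2 + 2 * (d : ℝ) * Δ ^ 2 / τ ^ 2 := by ring
    _ ≤ (d : ℝ) * L ^ 2 * τ ^ 2 + 2 * (d : ℝ) * Δ ^ 2 / τ ^ 2 := by
        gcongr
        exact half_le_self (by positivity)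

theorem full_approx_error (d : ℕ) (hd : 0 < d)
    (f δ : EuclideanSpace ℝ (Fin d) → ℝ)
    (Q : Set (EuclideanSpace ℝ (Fin d))) (hQconv : Convex ℝ Q)
    (L Δ τ : ℝ) (hL : 0 < L) (hΔ : 0 ≤ Δ) (hτ : 0 < τ)
    (hdiff : Differentiable ℝ f)
    (hLip : ∀ x ∈ Q, ∀ y ∈ Q, ‖gradient f x - gradient f y‖ ≤ L * ‖x - y‖)
    (hδ : ∀ x ∈ Q, |δ x| ≤ Δ)
    (x : EuclideanSpace ℝ (Fin d)) (hx : x ∈ Q)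
    (hxi : ∀ i : Fin d, x + τ • EuclideanSpace.single i (1 : ℝ) ∈ Q ∧
      x - τ • EuclideanSpace.single i (1 : ℝ) ∈ Q) :
    ‖(∑ i : Fin d,
        (((f (x + τ • EuclideanSpace.single i (1 : ℝ)) + δ (x + τ • EuclideanSpace.single i (1 : ℝ)))
          - (f (x - τ • EuclideanSpace.single i (1 : ℝ)) + δ (x - τ • EuclideanSpace.single i (1 : ℝ))))
          / (2 * τ)) • EuclideanSpace.single i (1 : ℝ)) - gradient f x‖ ^ 2 ≤
      (d : ℝ) * L ^ 2 * τ ^ 2 + 2 * (d : ℝ) * Δ ^ 2 / τ ^ 2 :=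
  full_approx_error_general d f δ Q hQconv L Δ τ hτ hdiff hLip hδ x hx hxi
end

section
/- (Frank–Wolfe one-step descent with inexact gradient) Let f be convex and L-smooth on a convex compact set Q of diameter D, x* a minimizer of f on Q, h ∈ ℝ^d an arbitrary vector, s = argmin_{s∈Q}⟨s,h⟩, and x⁺ = x + γ(s-x) with γ ∈ [0,1], x ∈ Q. Then f(x⁺) - f(x*) ≤ (1-γ)(f(x)-f(x*)) + γD‖h - ∇f(x)‖ + Lγ²D²/2. -/
open scoped RealInnerProductSpace

theorem fw_one_step (d : ℕ) (f : EuclideanSpace ℝ (Fin d) → ℝ)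
    (Q : Set (EuclideanSpace ℝ (Fin d))) (hQconv : Convex ℝ Q)
    (hQcomp : IsCompact Q)
    (L D γ : ℝ) (hL : 0 ≤ L) (hD : 0 ≤ D) (hγ0 : 0 ≤ γ) (hγ1 : γ ≤ 1)
    (hdiff : Differentiable ℝ f)
    (hdiam : ∀ y ∈ Q, ∀ z ∈ Q, ‖y - z‖ ≤ D)
    (hsmooth : ∀ y ∈ Q, ∀ z ∈ Q,
      f z ≤ f y + ⟪gradient f y, z - y⟫ + (L / 2) * ‖z - y‖ ^ 2)
    (hconv : ∀ y ∈ Q, ∀ z ∈ Q, f y + ⟪gradient f y, z - y⟫ ≤ f z)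
    (xstar : EuclideanSpace ℝ (Fin d)) (hxstar : xstar ∈ Q)
    (hmin : ∀ y ∈ Q, f xstar ≤ f y)
    (h x s : EuclideanSpace ℝ (Fin d)) (hx : x ∈ Q) (hs : s ∈ Q)
    (hargmin : ∀ y ∈ Q, ⟪s, h⟫ ≤ ⟪y, h⟫) :
    f (x + γ • (s - x)) - f xstar ≤
      (1 - γ) * (f x - f xstar) + γ * D * ‖h - gradient f x‖
        + L * γ ^ 2 * D ^ 2 / 2 := by
  set g := gradient f x with hg
  set xp := x + γ • (s - x) with hxp
  have hmem : xp ∈ Q := by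
    have hc := hQconv hx hs (by linarith : (0:ℝ) ≤ 1 - γ) hγ0 (by ring)
    have : xp = (1 - γ) • x + γ • s := by
      simp only [hxp]; module
    rw [this]; exact hc
  -- smoothness step
  have hsm := hsmooth x hx xp hmem
  have hdx : xp - x = γ • (s - x) := by simp only [hxp]; abel
  have hinn : ⟪g, xp - x⟫ = γ * ⟪g, s - x⟫ := by
    rw [hdx, real_inner_smul_right]
  have hnsx : ‖s - x‖ ≤ D := hdiam s hs x hx
  have hnorm : ‖xp - x‖ ^ 2 ≤ γ ^ 2 * D ^ 2 := by
    rw [hdx, norm_smul, Real.norm_eq_abs, abs_of_nonneg hγ0, mul_pow]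
    have h1 : 0 ≤ ‖s - x‖ := norm_nonneg _
    nlinarith [sq_nonneg γ, mul_le_mul hnsx hnsx h1 hD]
  -- decompose inner product
  have hdecomp : ⟪g, s - x⟫ = ⟪g, xstar - x⟫ + ⟪g - h, s - xstar⟫ + ⟪h, s - xstar⟫ := by
    rw [inner_sub_left]
    rw [inner_sub_right, inner_sub_right, inner_sub_right, inner_sub_right]
    ring
  -- convexity bound
  have hcv : ⟪g, xstar - x⟫ ≤ f xstar - f x := by
    have := hconv x hx xstar hxstar
    linarith
  -- error term bound
  have herr : ⟪g - h, s - xstar⟫ ≤ ‖h - g‖ * D := by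
    have h1 : ⟪g - h, s - xstar⟫ ≤ ‖g - h‖ * ‖s - xstar‖ := real_inner_le_norm _ _
    have h2 : ‖g - h‖ = ‖h - g‖ := norm_sub_rev _ _
    have h3 : ‖s - xstar‖ ≤ D := hdiam s hs xstar hxstar
    have h4 : 0 ≤ ‖h - g‖ := norm_nonneg _
    calc ⟪g - h, s - xstar⟫ ≤ ‖g - h‖ * ‖s - xstar‖ := h1
      _ = ‖h - g‖ * ‖s - xstar‖ := by rw [h2]
      _ ≤ ‖h - g‖ * D := by nlinarith
  -- argmin bound
  have harg : ⟪h, s - xstar⟫ ≤ 0 := by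
    have := hargmin xstar hxstar
    rw [inner_sub_right]
    linarith [real_inner_comm h s, real_inner_comm h xstar]
  have hkey : ⟪g, s - x⟫ ≤ f xstar - f x + ‖h - g‖ * D := by
    rw [hdecomp]; linarith
  have hγmul : γ * ⟪g, s - x⟫ ≤ γ * (f xstar - f x + ‖h - g‖ * D) :=
    mul_le_mul_of_nonneg_left hkey hγ0
  have hL2 : L / 2 * ‖xp - x‖ ^ 2 ≤ L * γ ^ 2 * D ^ 2 / 2 := by nlinarith
  have : f xp ≤ f x + γ * (f xstar - f x + ‖h - g‖ * D) + L * γ ^ 2 * D ^ 2 / 2 := by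
    calc f xp ≤ f x + ⟪g, xp - x⟫ + L / 2 * ‖xp - x‖ ^ 2 := hsm
      _ = f x + γ * ⟪g, s - x⟫ + L / 2 * ‖xp - x‖ ^ 2 := by rw [hinn]
      _ ≤ _ := by linarith
  nlinarith
end

section
/- (Gradient descent under PL) Let f : ℝ^d → ℝ be L-smooth satisfying the PL inequality ‖∇f(x)‖² ≥ 2μ(f(x)-f*) for all x, and let x⁺ = x - γh. Then f(x⁺) - f* ≤ (1-μγ)(f(x)-f*) - (1/(2γ) - L/2)‖x⁺-x‖² + (γ/2)‖h-∇f(x)‖². -/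
open scoped RealInnerProductSpace

theorem gd_one_step_pl (d : ℕ) (f : EuclideanSpace ℝ (Fin d) → ℝ)
    (L γ μ fstar : ℝ) (hL : 0 ≤ L) (hγ : 0 < γ) (hμ : 0 < μ)
    (hdiff : Differentiable ℝ f)
    (hsmooth : ∀ x y : EuclideanSpace ℝ (Fin d),
      f y ≤ f x + ⟪gradient f x, y - x⟫ + (L / 2) * ‖y - x‖ ^ 2)
    (hmin : ∀ y, fstar ≤ f y)
    (hPL : ∀ x : EuclideanSpace ℝ (Fin d),
      ‖gradient f x‖ ^ 2 ≥ 2 * μ * (f x - fstar))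
    (x h : EuclideanSpace ℝ (Fin d)) :
    f (x - γ • h) - fstar ≤
      (1 - μ * γ) * (f x - fstar)
        - (1 / (2 * γ) - L / 2) * ‖(x - γ • h) - x‖ ^ 2
        + (γ / 2) * ‖h - gradient f x‖ ^ 2 := by
  set g := gradient f x with hg
  have hdiff1 : (x - γ • h) - x = -(γ • h) := by abel
  have hs := hsmooth x (x - γ • h)
  rw [hdiff1] at hs ⊢
  have hinner : ⟪g, -(γ • h)⟫ = -(γ * ⟪g, h⟫) := by
    rw [inner_neg_right, real_inner_smul_right]
  have hnorm : ‖-(γ • h)‖ = γ * ‖h‖ := by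
    rw [norm_neg, norm_smul, Real.norm_eq_abs, abs_of_pos hγ]
  have hexp : ‖h - g‖ ^ 2 = ‖h‖ ^ 2 - 2 * ⟪g, h⟫ + ‖g‖ ^ 2 := by
    rw [norm_sub_sq_real, real_inner_comm]
  have hpl := hPL x
  rw [← hg] at hpl hs
  rw [hinner, hnorm] at hs
  rw [hnorm, hexp]
  have h1 : 2 * μ * (f x - fstar) ≤ ‖g‖ ^ 2 := hpl
  have h2 : 0 ≤ f x - fstar := by linarith [hmin x]
  have key : 1 / (2 * γ) * (γ * ‖h‖) ^ 2 = γ / 2 * ‖h‖ ^ 2 := by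
    field_simp
  nlinarith [mul_le_mul_of_nonneg_left h1 (le_of_lt (half_pos hγ)), key]
end
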